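/- arXiv:1204.0147 — 5 statements merged into one kernel-verified Lean document; each statement's English description precedes it below -/
import Mathlib

section
/- Let f, g be convex functions on [0,1]^d, bounded in absolute value by B, and coordinate-wise Lipschitz with constants Γ_1, ..., Γ_d < ∞. Then ||f - g||_∞ ≤ ℓ_H(V_f(B), V_g(B)) · √(1 + Γ_1² + ... + Γ_d²), where V_f(B) = {(x, y) : x ∈ [0,1]^d, f(x) ≤ y ≤ B} is the truncated epigraph and ℓ_H denotes the Hausdorff distance between compact subsets of ℝ^{d+1}. -/
/-! For `x` in the cube, the point `(x, g x)` lies in `V_g(B)`, so its distance to `V_f(B)` is at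
most `ℓ_H`. For `(y, t) ∈ V_f(B)`, moving from `x` to `y` one coordinate at a time gives
`f x ≤ f y + ∑ Γᵢ |xᵢ - yᵢ| ≤ t + ∑ Γᵢ |xᵢ - yᵢ|`, and Cauchy–Schwarz with the weights `(Γ, 1)` bounds
`(t - g x) + ∑ Γᵢ |xᵢ - yᵢ|` by `√(1 + ∑ Γᵢ²)` times the distance from `(x, g x)` to `(y, t)`.
Exchanging `f` and `g` gives the other sign. -/

/-- Truncated epigraph of `f` (defined on the unit cube), as a subset of `ℝ^{d+1}`
with the Euclidean metric. -/
def truncEpigraph (d : ℕ) (f : (Fin d → ℝ) → ℝ) (B : ℝ) :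
    Set (EuclideanSpace ℝ (Fin (d + 1))) :=
  {z | (∀ i : Fin d, z i.castSucc ∈ Set.Icc (0:ℝ) 1) ∧
       f (fun i => z i.castSucc) ≤ z (Fin.last d) ∧ z (Fin.last d) ≤ B}

open Metric Set

theorem abs_sub_le_sum_mul_of_lipschitz_coord {ι : Type*} [Fintype ι] {a b : ι → ℝ}
    {f : (ι → ℝ) → ℝ} {Γ : ι → ℝ}
    (hf : ∀ i, ∀ x ∈ Icc a b, ∀ y ∈ Icc a b, (∀ j, j ≠ i → x j = y j) →
      |f x - f y| ≤ Γ i * |x i - y i|)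
    {x y : ι → ℝ} (hx : x ∈ Icc a b) (hy : y ∈ Icc a b) :
    |f x - f y| ≤ ∑ i, Γ i * |x i - y i| := by
  classical
  have hmem (s : Finset ι) : s.piecewise y x ∈ Icc a b := by
    rw [← pi_univ_Icc] at hx hy ⊢
    exact s.piecewise_mem_set_pi hy hx
  suffices ∀ s : Finset ι, |f x - f (s.piecewise y x)| ≤ ∑ i ∈ s, Γ i * |x i - y i| by
    simpa using this Finset.univ
  intro s
  induction s using Finset.induction_on with
  | empty => simp
  | insert j s hj ih =>
    have hstep : |f (s.piecewise y x) - f ((insert j s).piecewise y x)| ≤ Γ j * |x j - y j| := by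
      have := hf j _ (hmem s) _ (hmem (insert j s)) fun i hi => by
        rw [Finset.piecewise_insert, Function.update_of_ne hi]
      rw [Finset.piecewise_insert] at this ⊢
      rwa [Function.update_self, Finset.piecewise_eq_of_notMem _ _ _ hj] at this
    calc |f x - f ((insert j s).piecewise y x)|
        ≤ |f x - f (s.piecewise y x)| + |f (s.piecewise y x) - f ((insert j s).piecewise y x)| :=
          abs_sub_le _ _ _
      _ ≤ ∑ i ∈ s, Γ i * |x i - y i| + Γ j * |x j - y j| := add_le_add ih hstep
      _ = ∑ i ∈ insert j s, Γ i * |x i - y i| := by rw [Finset.sum_insert hj, add_comm]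

theorem EuclideanSpace.sum_mul_abs_sub_le_sqrt_mul_dist {ι : Type*} [Fintype ι] (w : ι → ℝ)
    (z z' : EuclideanSpace ℝ ι) :
    ∑ i, w i * |z i - z' i| ≤ √(∑ i, w i ^ 2) * dist z z' := by
  rw [EuclideanSpace.dist_eq]
  simpa only [Real.dist_eq, sq_abs] using
    Real.sum_mul_le_sqrt_mul_sqrt Finset.univ w fun i => |z i - z' i|

namespace truncEpigraph

variable {d : ℕ} {f : (Fin d → ℝ) → ℝ} {B : ℝ}

theorem toLp_snoc_mem {x : Fin d → ℝ} (hx : x ∈ Icc 0 1) (hB : f x ≤ B) :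
    WithLp.toLp 2 (Fin.snoc x (f x)) ∈ truncEpigraph d f B := by
  refine ⟨fun i => ?_, ?_, ?_⟩ <;> simp only [Fin.snoc_castSucc, Fin.snoc_last]
  · exact ⟨hx.1 i, hx.2 i⟩
  · rfl
  · exact hB

theorem nonempty (h : f 0 ≤ B) : (truncEpigraph d f B).Nonempty :=
  ⟨_, toLp_snoc_mem ⟨le_rfl, zero_le_one⟩ h⟩

theorem isBounded {m : ℝ} (hm : ∀ x ∈ Icc 0 1, m ≤ f x) :
    Bornology.IsBounded (truncEpigraph d f B) := by
  refine Bornology.isBounded_induced.2 <|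
    (isBounded_Icc (fun _ => min 0 m) (fun _ => max 1 B)).subset ?_
  rintro _ ⟨z, ⟨hcube, hgraph, htop⟩, rfl⟩
  have hy : (fun i : Fin d => z i.castSucc) ∈ Icc 0 1 :=
    ⟨fun i => (hcube i).1, fun i => (hcube i).2⟩
  have hlow := (hm _ hy).trans hgraph
  refine ⟨fun k => Fin.lastCases ?_ (fun i => ?_) k, fun k => Fin.lastCases ?_ (fun i => ?_) k⟩
  · exact (min_le_right _ _).trans hlow
  · exact (min_le_left _ _).trans (hcube i).1
  · exact htop.trans (le_max_right _ _)
  · exact (hcube i).2.trans (le_max_left _ _)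

theorem hausdorffEDist_ne_top {g : (Fin d → ℝ) → ℝ}
    (hf : ∀ x ∈ Icc 0 1, |f x| ≤ B) (hg : ∀ x ∈ Icc 0 1, |g x| ≤ B) :
    hausdorffEDist (truncEpigraph d f B) (truncEpigraph d g B) ≠ ⊤ :=
  have h0 : (0 : Fin d → ℝ) ∈ Icc 0 1 := ⟨le_rfl, zero_le_one⟩
  hausdorffEDist_ne_top_of_nonempty_of_bounded
    (nonempty (abs_le.1 (hf 0 h0)).2) (nonempty (abs_le.1 (hg 0 h0)).2)
    (isBounded fun x hx => (abs_le.1 (hf x hx)).1) (isBounded fun x hx => (abs_le.1 (hg x hx)).1)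

variable {Γ : Fin d → ℝ}

theorem sub_le_mul_dist
    (hf : ∀ x ∈ Icc 0 1, ∀ y ∈ Icc 0 1, |f x - f y| ≤ ∑ i, Γ i * |x i - y i|)
    {x : Fin d → ℝ} (hx : x ∈ Icc 0 1) (t : ℝ) {q : EuclideanSpace ℝ (Fin (d + 1))}
    (hq : q ∈ truncEpigraph d f B) :
    f x - t ≤ √(1 + ∑ i, Γ i ^ 2) * dist (WithLp.toLp 2 (Fin.snoc x t)) q := by
  obtain ⟨hcube, hgraph, -⟩ := hq
  set y : Fin d → ℝ := fun i => q i.castSucc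
  have hy : y ∈ Icc 0 1 := ⟨fun i => (hcube i).1, fun i => (hcube i).2⟩
  have hcs := EuclideanSpace.sum_mul_abs_sub_le_sqrt_mul_dist (Fin.snoc Γ 1)
    (WithLp.toLp 2 (Fin.snoc x t)) q
  simp only [Fin.sum_univ_castSucc, Fin.snoc_castSucc, Fin.snoc_last, one_pow, one_mul] at hcs
  calc f x - t ≤ ∑ i, Γ i * |x i - y i| + |t - q (Fin.last d)| := by
        linarith [le_abs_self (f x - f y), hf x hx y hy, neg_abs_le (t - q (Fin.last d))]
    _ ≤ _ := by rwa [add_comm (∑ i, Γ i ^ 2)] at hcs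

theorem sub_le_hausdorffDist_mul {g : (Fin d → ℝ) → ℝ}
    (hfB : ∀ x ∈ Icc 0 1, |f x| ≤ B) (hgB : ∀ x ∈ Icc 0 1, |g x| ≤ B)
    (hf : ∀ x ∈ Icc 0 1, ∀ y ∈ Icc 0 1, |f x - f y| ≤ ∑ i, Γ i * |x i - y i|)
    {x : Fin d → ℝ} (hx : x ∈ Icc 0 1) :
    f x - g x ≤ hausdorffDist (truncEpigraph d f B) (truncEpigraph d g B) *
      √(1 + ∑ i, Γ i ^ 2) := by
  have hC : 0 < √(1 + ∑ i, Γ i ^ 2) := Real.sqrt_pos.2 (by positivity)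
  have hp := toLp_snoc_mem hx (abs_le.1 (hgB x hx)).2
  have hinf : (f x - g x) / √(1 + ∑ i, Γ i ^ 2) ≤
      infDist (WithLp.toLp 2 (Fin.snoc x (g x))) (truncEpigraph d f B) :=
    (le_infDist (nonempty (abs_le.1 (hfB 0 ⟨le_rfl, zero_le_one⟩)).2)).2 fun q hq =>
      (div_le_iff₀' hC).2 (sub_le_mul_dist hf hx (g x) hq)
  rw [hausdorffDist_comm, ← div_le_iff₀ hC]
  exact hinf.trans (infDist_le_hausdorffDist_of_mem hp (hausdorffEDist_ne_top hgB hfB))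

end truncEpigraph

theorem sup_dist_le_hausdorff_dist_epigraphs_general (d : ℕ) (B : ℝ)
    (Γ : Fin d → ℝ) (f g : (Fin d → ℝ) → ℝ)
    (hfB : ∀ x ∈ Set.Icc (0 : Fin d → ℝ) 1, |f x| ≤ B)
    (hgB : ∀ x ∈ Set.Icc (0 : Fin d → ℝ) 1, |g x| ≤ B)
    (hfLip : ∀ i, ∀ x ∈ Set.Icc (0 : Fin d → ℝ) 1, ∀ y ∈ Set.Icc (0 : Fin d → ℝ) 1,
      (∀ j, j ≠ i → x j = y j) → |f x - f y| ≤ Γ i * |x i - y i|)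
    (hgLip : ∀ i, ∀ x ∈ Set.Icc (0 : Fin d → ℝ) 1, ∀ y ∈ Set.Icc (0 : Fin d → ℝ) 1,
      (∀ j, j ≠ i → x j = y j) → |g x - g y| ≤ Γ i * |x i - y i|) :
    ∀ x ∈ Set.Icc (0 : Fin d → ℝ) 1,
      |f x - g x| ≤ Metric.hausdorffDist (truncEpigraph d f B) (truncEpigraph d g B) *
        Real.sqrt (1 + ∑ i, Γ i ^ 2) := by
  intro x hx
  rw [abs_sub_le_iff]
  constructor
  · exact truncEpigraph.sub_le_hausdorffDist_mul hfB hgB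
      (fun _ hx _ hy => abs_sub_le_sum_mul_of_lipschitz_coord hfLip hx hy) hx
  · rw [hausdorffDist_comm]
    exact truncEpigraph.sub_le_hausdorffDist_mul hgB hfB
      (fun _ hx _ hy => abs_sub_le_sum_mul_of_lipschitz_coord hgLip hx hy) hx

theorem sup_dist_le_hausdorff_dist_epigraphs (d : ℕ) (hd : 1 ≤ d) (B : ℝ) (hB : 0 < B)
    (Γ : Fin d → ℝ) (hΓ : ∀ i, 0 < Γ i) (f g : (Fin d → ℝ) → ℝ)
    (hf : ConvexOn ℝ (Set.Icc (0 : Fin d → ℝ) 1) f)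
    (hg : ConvexOn ℝ (Set.Icc (0 : Fin d → ℝ) 1) g)
    (hfB : ∀ x ∈ Set.Icc (0 : Fin d → ℝ) 1, |f x| ≤ B)
    (hgB : ∀ x ∈ Set.Icc (0 : Fin d → ℝ) 1, |g x| ≤ B)
    (hfLip : ∀ i, ∀ x ∈ Set.Icc (0 : Fin d → ℝ) 1, ∀ y ∈ Set.Icc (0 : Fin d → ℝ) 1,
      (∀ j, j ≠ i → x j = y j) → |f x - f y| ≤ Γ i * |x i - y i|)
    (hgLip : ∀ i, ∀ x ∈ Set.Icc (0 : Fin d → ℝ) 1, ∀ y ∈ Set.Icc (0 : Fin d → ℝ) 1,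
      (∀ j, j ≠ i → x j = y j) → |g x - g y| ≤ Γ i * |x i - y i|) :
    ∀ x ∈ Set.Icc (0 : Fin d → ℝ) 1,
      |f x - g x| ≤ Metric.hausdorffDist (truncEpigraph d f B) (truncEpigraph d g B) *
        Real.sqrt (1 + ∑ i, Γ i ^ 2) :=
  sup_dist_le_hausdorff_dist_epigraphs_general d B Γ f g hfB hgB hfLip hgLip
end

section
/- Let f, g be convex on [0,1]^d with |f|,|g| ≤ 1, let ρ = ℓ_H(V_f(1), V_g(1)) > 0, and for x in the open cube (0,1)^d let m_f(x), m_g(x) denote subgradients of f and g at x. Then for every x ∈ (0,1)^d, |f(x) - g(x)| ≤ ρ (1 + |m_f(x)| + |m_g(x)|), where |·| is the Euclidean norm. -/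
open Filter Metric Topology

theorem le_mul_hausdorffDist_of_forall_le_mul_dist {α : Type*} [PseudoMetricSpace α]
    {s t : Set α} {x : α} (hx : x ∈ s) (hfin : hausdorffEDist s t ≠ ⊤) {a C : ℝ}
    (hC : 0 ≤ C) (h : ∀ y ∈ t, a ≤ C * dist x y) :
    a ≤ C * hausdorffDist s t := by
  have hlim : Tendsto (fun ε => C * (hausdorffDist s t + ε)) (𝓝[>] 0)
      (𝓝 (C * hausdorffDist s t)) := by
    refine tendsto_nhdsWithin_of_tendsto_nhds ?_
    exact (continuous_const.mul (continuous_const.add continuous_id)).tendsto' 0 _ (by simp)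
  refine ge_of_tendsto hlim ?_
  filter_upwards [self_mem_nhdsWithin] with ε (hε : 0 < ε)
  obtain ⟨y, hy, hxy⟩ := exists_dist_lt_of_hausdorffDist_lt hx (lt_add_of_pos_right _ hε) hfin
  exact (h y hy).trans (mul_le_mul_of_nonneg_left hxy.le hC)

theorem dist_toLp_snoc_sq {d : ℕ} (x : Fin d → ℝ) (r : ℝ) (q : EuclideanSpace ℝ (Fin (d + 1))) :
    dist (WithLp.toLp 2 (Fin.snoc x r : Fin (d + 1) → ℝ)) q ^ 2
      = ∑ i, (x i - q i.castSucc) ^ 2 + (r - q (Fin.last d)) ^ 2 := by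
  rw [EuclideanSpace.dist_eq, Real.sq_sqrt (by positivity), Fin.sum_univ_castSucc]
  simp [Real.dist_eq, sq_abs]

theorem toLp_snoc_mem_truncEpigraph {d : ℕ} {f : (Fin d → ℝ) → ℝ} {B : ℝ} {x : Fin d → ℝ}
    (hx : x ∈ Set.Icc (0 : Fin d → ℝ) 1) (hfx : f x ≤ B) :
    WithLp.toLp 2 (Fin.snoc x (f x) : Fin (d + 1) → ℝ) ∈ truncEpigraph d f B := by
  simpa [truncEpigraph] using ⟨fun i => ⟨hx.1 i, hx.2 i⟩, hfx⟩

theorem sub_le_mul_hausdorffDist_truncEpigraph {d : ℕ} {f g : (Fin d → ℝ) → ℝ} {B : ℝ}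
    {x : Fin d → ℝ} (hx : x ∈ Set.Icc (0 : Fin d → ℝ) 1) (hfx : f x ≤ B) (m : Fin d → ℝ)
    (hm : ∀ z ∈ Set.Icc (0 : Fin d → ℝ) 1, g x + ∑ i, m i * (z i - x i) ≤ g z)
    (hfin : hausdorffEDist (truncEpigraph d f B) (truncEpigraph d g B) ≠ ⊤) :
    g x - f x ≤ hausdorffDist (truncEpigraph d f B) (truncEpigraph d g B)
      * (1 + Real.sqrt (∑ i, m i ^ 2)) := by
  set p : EuclideanSpace ℝ (Fin (d + 1)) := WithLp.toLp 2 (Fin.snoc x (f x))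
  rw [mul_comm]
  refine le_mul_hausdorffDist_of_forall_le_mul_dist (toLp_snoc_mem_truncEpigraph hx hfx) hfin
    (by positivity) ?_
  rintro q ⟨hq_cube, hq_above, -⟩
  set z : Fin d → ℝ := fun i => q i.castSucc
  have hdist : dist p q ^ 2 = ∑ i, (x i - z i) ^ 2 + (f x - q (Fin.last d)) ^ 2 :=
    dist_toLp_snoc_sq x (f x) q
  have hsq : 0 ≤ ∑ i, (x i - z i) ^ 2 := by positivity
  have hlast : q (Fin.last d) - f x ≤ dist p q :=
    (abs_le_of_sq_le_sq' (by linarith) dist_nonneg).2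
  have hcube : Real.sqrt (∑ i, (x i - z i) ^ 2) ≤ dist p q :=
    Real.sqrt_le_iff.2 ⟨dist_nonneg, by linarith [sq_nonneg (f x - q (Fin.last d))]⟩
  have hcs := Real.sum_mul_le_sqrt_mul_sqrt Finset.univ m (fun i => x i - z i)
  have hsub := hm z ⟨fun i => (hq_cube i).1, fun i => (hq_cube i).2⟩
  have hflip : ∑ i, m i * (x i - z i) = -∑ i, m i * (z i - x i) := by
    simp only [mul_sub, Finset.sum_sub_distrib, neg_sub]
  linarith [mul_le_mul_of_nonneg_left hcube (Real.sqrt_nonneg (∑ i, m i ^ 2))]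

theorem pointwise_bound_via_subgradients_general (d : ℕ)
    (f g : (Fin d → ℝ) → ℝ)
    (hf1 : ∀ x ∈ Set.Icc (0 : Fin d → ℝ) 1, |f x| ≤ 1)
    (hg1 : ∀ x ∈ Set.Icc (0 : Fin d → ℝ) 1, |g x| ≤ 1)
    (mf mg : (Fin d → ℝ) → Fin d → ℝ)
    (hmf : ∀ x : Fin d → ℝ, (∀ i, x i ∈ Set.Ioo (0:ℝ) 1) →
      ∀ z ∈ Set.Icc (0 : Fin d → ℝ) 1, f x + ∑ i, mf x i * (z i - x i) ≤ f z)
    (hmg : ∀ x : Fin d → ℝ, (∀ i, x i ∈ Set.Ioo (0:ℝ) 1) →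
      ∀ z ∈ Set.Icc (0 : Fin d → ℝ) 1, g x + ∑ i, mg x i * (z i - x i) ≤ g z)
    (ρ : ℝ) (hρ : ρ = Metric.hausdorffDist (truncEpigraph d f 1) (truncEpigraph d g 1))
    (hρpos : 0 < ρ) :
    ∀ x : Fin d → ℝ, (∀ i, x i ∈ Set.Ioo (0:ℝ) 1) →
      |f x - g x| ≤ ρ * (1 + Real.sqrt (∑ i, (mf x i) ^ 2)
        + Real.sqrt (∑ i, (mg x i) ^ 2)) := by
  intro x hx
  have hx_cube : x ∈ Set.Icc (0 : Fin d → ℝ) 1 := ⟨fun i => (hx i).1.le, fun i => (hx i).2.le⟩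
  -- `hausdorffDist` is `0` when the Hausdorff edistance is infinite.
  have hfin : hausdorffEDist (truncEpigraph d f 1) (truncEpigraph d g 1) ≠ ⊤ :=
    (ENNReal.toReal_pos_iff.1 (by rwa [hρ] at hρpos)).2.ne
  have hgf := sub_le_mul_hausdorffDist_truncEpigraph hx_cube (abs_le.1 (hf1 x hx_cube)).2
    (mg x) (hmg x hx) hfin
  have hfg := sub_le_mul_hausdorffDist_truncEpigraph hx_cube (abs_le.1 (hg1 x hx_cube)).2
    (mf x) (hmf x hx) (by rwa [hausdorffEDist_comm] at hfin)
  rw [hausdorffDist_comm, ← hρ] at hfg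
  rw [← hρ] at hgf
  have hρMf := mul_nonneg hρpos.le (Real.sqrt_nonneg (∑ i, mf x i ^ 2))
  have hρMg := mul_nonneg hρpos.le (Real.sqrt_nonneg (∑ i, mg x i ^ 2))
  rw [abs_le]
  constructor <;> linarith

theorem pointwise_bound_via_subgradients (d : ℕ) (hd : 1 ≤ d)
    (f g : (Fin d → ℝ) → ℝ)
    (hf : ConvexOn ℝ (Set.Icc (0 : Fin d → ℝ) 1) f)
    (hg : ConvexOn ℝ (Set.Icc (0 : Fin d → ℝ) 1) g)
    (hf1 : ∀ x ∈ Set.Icc (0 : Fin d → ℝ) 1, |f x| ≤ 1)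
    (hg1 : ∀ x ∈ Set.Icc (0 : Fin d → ℝ) 1, |g x| ≤ 1)
    (mf mg : (Fin d → ℝ) → Fin d → ℝ)
    (hmf : ∀ x : Fin d → ℝ, (∀ i, x i ∈ Set.Ioo (0:ℝ) 1) →
      ∀ z ∈ Set.Icc (0 : Fin d → ℝ) 1, f x + ∑ i, mf x i * (z i - x i) ≤ f z)
    (hmg : ∀ x : Fin d → ℝ, (∀ i, x i ∈ Set.Ioo (0:ℝ) 1) →
      ∀ z ∈ Set.Icc (0 : Fin d → ℝ) 1, g x + ∑ i, mg x i * (z i - x i) ≤ g z)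
    (ρ : ℝ) (hρ : ρ = Metric.hausdorffDist (truncEpigraph d f 1) (truncEpigraph d g 1))
    (hρpos : 0 < ρ) :
    ∀ x : Fin d → ℝ, (∀ i, x i ∈ Set.Ioo (0:ℝ) 1) →
      |f x - g x| ≤ ρ * (1 + Real.sqrt (∑ i, (mf x i) ^ 2)
        + Real.sqrt (∑ i, (mg x i) ^ 2)) :=
  pointwise_bound_via_subgradients_general d f g hf1 hg1 mf mg hmf hmg ρ hρ hρpos
end

section
/- Let f be a convex function on [0,1]^d with |f| ≤ 1, and for x in the interior let m_f(x) be any subgradient of f at x. Then for any 0 < ρ < 1/2, ∫_{[ρ,1-ρ]^d} |m_f(x)| dx ≤ 8d, where |·| is the Euclidean norm on ℝ^d. -/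
/-!
Where `x ± ρ eᵢ` lie in the cube, the subgradient inequality gives `± ρ mᵢ(x) ≤ f (x ± ρ eᵢ) - f x`,
so `|mᵢ(x)|` is at most the sum of the positive parts of the difference quotients
`(f (x ± ρ eᵢ) - f x) / ρ`, and `|m(x)| ≤ ∑ᵢ |mᵢ(x)|`. Unlike `m`, which need not be measurable,
these quotients are integrable, and by Fubini it suffices to integrate them along lines parallel to
`eᵢ`. There `f` is a convex `g` with `|g| ≤ 1`, and `t ↦ (g (t + ρ) - g t) / ρ` is monotone, so its
positive part integrates to `∫_c^{1-ρ}` of it for some `c`, which telescopes to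
`(∫_{1-ρ}^1 g - ∫_c^{c+ρ} g) / ρ ≤ 2`. Backward quotients reduce to forward ones by reflecting `g`.
The `2d` quotients give the bound `4d ≤ 8d`.
-/

open MeasureTheory Set

theorem Real.sqrt_sum_sq_le_sum_abs {ι : Type*} (s : Finset ι) (a : ι → ℝ) :
    √(∑ i ∈ s, a i ^ 2) ≤ ∑ i ∈ s, |a i| :=
  Real.sqrt_le_iff.2 ⟨Finset.sum_nonneg fun i _ => abs_nonneg (a i), by
    simpa only [sq_abs] using Finset.sum_sq_le_sq_sum_of_nonneg fun i _ => abs_nonneg (a i)⟩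

theorem abs_le_max_quot_add_max_quot_of_subgradient {ι : Type*} [Fintype ι] [DecidableEq ι]
    {s : Set (ι → ℝ)} {f : (ι → ℝ) → ℝ} {x m : ι → ℝ}
    (hm : ∀ z ∈ s, f x + ∑ j, m j * (z j - x j) ≤ f z) {ρ : ℝ} (hρ : 0 < ρ) (i : ι)
    (hρs : x + Pi.single i ρ ∈ s) (hρs' : x + Pi.single i (-ρ) ∈ s) :
    |m i| ≤ max ((f (x + Pi.single i ρ) - f x) / ρ) 0 +
      max ((f (x + Pi.single i (-ρ)) - f x) / ρ) 0 := by
  have hdir : ∀ σ, x + Pi.single i σ ∈ s → m i * σ ≤ f (x + Pi.single i σ) - f x := by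
    intro σ hσ
    have := hm _ hσ
    simp only [Pi.add_apply, add_sub_cancel_left, Pi.single_apply, mul_ite, mul_zero,
      Finset.sum_ite_eq', Finset.mem_univ, if_true] at this
    linarith
  set p := (f (x + Pi.single i ρ) - f x) / ρ
  set q := (f (x + Pi.single i (-ρ)) - f x) / ρ
  have hup : m i ≤ p := (le_div_iff₀ hρ).2 (hdir ρ hρs)
  have hdown : -m i ≤ q := (le_div_iff₀ hρ).2 (by linarith [hdir (-ρ) hρs'])
  exact abs_le.2 ⟨by linarith [le_max_left q 0, le_max_right p 0],
    by linarith [le_max_left p 0, le_max_right q 0]⟩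

theorem MonotoneOn.exists_intervalIntegral_max_zero_eq {a : ℝ → ℝ} {r s : ℝ} (hrs : r ≤ s)
    (ha : MonotoneOn a (Icc r s)) :
    ∃ c ∈ Icc r s, ∫ t in r..s, max (a t) 0 = ∫ t in c..s, a t := by
  -- `c` is where `a` becomes positive, or `s` if it never does
  set S := insert s {t ∈ Icc r s | 0 < a t}
  have hS_lb : ∀ t ∈ S, r ≤ t := by rintro t (rfl | ⟨ht, -⟩); exacts [hrs, ht.1]
  set c := sInf S
  have hcs : c ≤ s := csInf_le ⟨r, hS_lb⟩ (mem_insert s _)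
  have hrc : r ≤ c := le_csInf (insert_nonempty _ _) hS_lb
  have hneg : ∀ t ∈ Ioo r c, max (a t) 0 = 0 := fun t ht =>
    max_eq_right <| not_lt.1 fun hpos =>
      (csInf_le ⟨r, hS_lb⟩ (Or.inr ⟨⟨ht.1.le, ht.2.le.trans hcs⟩, hpos⟩)).not_gt ht.2
  have hpos : ∀ t ∈ Ioc c s, max (a t) 0 = a t := by
    intro t ht
    obtain ⟨u, hu, hut⟩ := exists_lt_of_csInf_lt (insert_nonempty _ _) ht.1
    rcases hu with rfl | ⟨hu, hau⟩
    · exact absurd ht.2 hut.not_ge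
    · exact max_eq_left (hau.trans_le (ha hu ⟨hu.1.trans hut.le, ht.2⟩ hut.le)).le
  have hmono : MonotoneOn (fun t => max (a t) 0) (Icc r s) :=
    fun x hx y hy hxy => max_le_max (ha hx hy hxy) le_rfl
  have hint : ∀ {u v}, u ∈ Icc r s → v ∈ Icc r s →
      IntervalIntegrable (fun t => max (a t) 0) volume u v := fun hu hv =>
    (hmono.mono (uIcc_subset_Icc hu hv)).intervalIntegrable
  refine ⟨c, ⟨hrc, hcs⟩, ?_⟩
  rw [← intervalIntegral.integral_add_adjacent_intervals (hint ⟨le_rfl, hrs⟩ ⟨hrc, hcs⟩)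
    (hint ⟨hrc, hcs⟩ ⟨hrs, le_rfl⟩), intervalIntegral.integral_of_le hrc,
    intervalIntegral.integral_of_le hcs, intervalIntegral.integral_of_le hcs,
    ← restrict_Ioo_eq_restrict_Ioc, setIntegral_congr_fun measurableSet_Ioo hneg,
    setIntegral_congr_fun measurableSet_Ioc hpos, integral_zero, zero_add]

theorem ConvexOn.monotoneOn_slope_add {s : Set ℝ} {g : ℝ → ℝ} (hg : ConvexOn ℝ s g) {h : ℝ}
    (hh : 0 < h) : MonotoneOn (fun t => slope g t (t + h)) {t | t ∈ s ∧ t + h ∈ s} := by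
  rintro u ⟨hu, huh⟩ v ⟨hv, hvh⟩ huv
  rcases huv.eq_or_lt with rfl | huv
  · rfl
  calc slope g u (u + h) ≤ slope g u (v + h) :=
        hg.slope_mono hu ⟨huh, by simp; linarith⟩ ⟨hvh, by simp; linarith⟩ (by linarith)
    _ = slope g (v + h) u := slope_comm _ _ _
    _ ≤ slope g (v + h) v :=
        hg.slope_mono hvh ⟨hu, by simp; linarith⟩ ⟨hv, by simp; linarith⟩ huv.le
    _ = slope g v (v + h) := slope_comm _ _ _

theorem IntervalIntegrable.integral_slope_add_eq {f : ℝ → ℝ} {a b c : ℝ}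
    (hf : IntervalIntegrable f volume a (b + c)) (hab : a ≤ b) (hc : 0 ≤ c) :
    ∫ x in a..b, slope f x (x + c) =
      ((∫ x in b..b + c, f x) - ∫ x in a..a + c, f x) / c := by
  simp only [slope, add_sub_cancel_left, vsub_eq_sub, smul_eq_mul,
    intervalIntegral.integral_const_mul]
  rw [intervalIntegral.integral_sub ((hf.comp_add_right c).mono_set (by grind [uIcc]))
      (hf.mono_set (by grind [uIcc])), intervalIntegral.integral_comp_add_right,
    intervalIntegral.integral_interval_sub_interval_comm' (hf.mono_set (by grind [uIcc]))
      (hf.mono_set (by grind [uIcc])) (hf.mono_set (by grind [uIcc])), inv_mul_eq_div]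

section Measurability

variable {E : Type*} [NormedAddCommGroup E] [NormedSpace ℝ E] [MeasurableSpace E] [BorelSpace E]
  [FiniteDimensional ℝ E] {μ : Measure E} [μ.IsAddHaarMeasure] {s : Set E} {f : E → ℝ} {M : ℝ}

theorem ConvexOn.aestronglyMeasurable_restrict (hf : ConvexOn ℝ s f) :
    AEStronglyMeasurable f (μ.restrict s) := by
  have hs : interior s =ᵐ[μ] s := ae_eq_set.2
    ⟨by simp [sdiff_eq_empty.2 interior_subset], measure_mono_null
      (fun x hx => ⟨subset_closure hx.1, hx.2⟩ : s \ interior s ⊆ frontier s)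
      (hf.1.addHaar_frontier μ)⟩
  rw [← Measure.restrict_congr_set hs]
  exact hf.continuousOn_interior.aestronglyMeasurable measurableSet_interior

theorem ConvexOn.integrableOn_of_abs_le (hf : ConvexOn ℝ s f) (hM : ∀ x ∈ s, |f x| ≤ M)
    (hs : μ s ≠ ⊤) : IntegrableOn f s μ :=
  .of_bound hs.lt_top hf.aestronglyMeasurable_restrict M
    ((ae_restrict_iff'₀ (hf.1.nullMeasurableSet μ)).2 (.of_forall hM))

theorem ConvexOn.integrableOn_comp_add_sub (hf : ConvexOn ℝ s f) (hM : ∀ x ∈ s, |f x| ≤ M)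
    (hs : μ s ≠ ⊤) {t : Set E} {v : E} (ht : ∀ x ∈ t, x ∈ s ∧ x + v ∈ s) :
    IntegrableOn (fun x => f (x + v) - f x) t μ := by
  have hshift : IntegrableOn (fun x => f (x + v)) ((fun x => v + x) ⁻¹' s) μ :=
    (hf.translate_left v).integrableOn_of_abs_le
      (fun x hx => hM (x + v) (by simpa [add_comm] using hx)) (by rwa [measure_preimage_add])
  exact (hshift.mono_set fun x hx => by simpa [add_comm] using (ht x hx).2).sub
    ((hf.integrableOn_of_abs_le hM hs).mono_set fun x hx => (ht x hx).1)

end Measurability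

section OneDimensional

variable {g : ℝ → ℝ} {a b h M r : ℝ}

theorem ConvexOn.intervalIntegral_max_forward_quot_le (hg : ConvexOn ℝ (Icc a b) g)
    (hM : ∀ t ∈ Icc a b, |g t| ≤ M) (hh : 0 < h) (har : a ≤ r) (hrb : r ≤ b - h) :
    ∫ t in r..(b - h), max ((g (t + h) - g t) / h) 0 ≤ 2 * M := by
  have hslope : ∀ t, (g (t + h) - g t) / h = slope g t (t + h) := fun t => by
    rw [slope_def_field, add_sub_cancel_left]
  simp_rw [hslope]
  have hmono : MonotoneOn (fun t => slope g t (t + h)) (Icc r (b - h)) :=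
    (hg.monotoneOn_slope_add hh).mono fun t ht =>
      ⟨⟨by linarith [ht.1], by linarith [ht.2]⟩, ⟨by linarith [ht.1], by linarith [ht.2]⟩⟩
  obtain ⟨c, hc, hc_eq⟩ := hmono.exists_intervalIntegral_max_zero_eq (by linarith)
  have hg_int : IntervalIntegrable g volume c (b - h + h) :=
    ((hg.integrableOn_of_abs_le hM measure_Icc_lt_top.ne).mono_set
      (uIcc_subset_Icc ⟨by linarith [hc.1], by linarith [hc.2]⟩
        ⟨by linarith, by linarith⟩)).intervalIntegrable
  have hbound : ∀ u ∈ Icc a (b - h), |∫ t in u..u + h, g t| ≤ M * h := fun u hu => by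
    refine (intervalIntegral.norm_integral_le_of_norm_le_const (f := g) fun t ht =>
      (Real.norm_eq_abs _).trans_le (hM t ?_)).trans_eq
        (by rw [add_sub_cancel_left, abs_of_pos hh])
    rw [uIoc_of_le (by linarith)] at ht
    exact ⟨by linarith [hu.1, ht.1], by linarith [hu.2, ht.2]⟩
  rw [hc_eq, hg_int.integral_slope_add_eq hc.2 hh.le, sub_add_cancel, div_le_iff₀ hh]
  have h₁ := abs_le.1 (hbound (b - h) ⟨by linarith, le_rfl⟩)
  have h₂ := abs_le.1 (hbound c ⟨by linarith [hc.1], hc.2⟩)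
  rw [sub_add_cancel] at h₁
  linarith [h₁.2, h₂.1]

theorem ConvexOn.intervalIntegral_max_backward_quot_le (hg : ConvexOn ℝ (Icc a b) g)
    (hM : ∀ t ∈ Icc a b, |g t| ≤ M) (hh : 0 < h) (har : a + h ≤ r) (hrb : r ≤ b) :
    ∫ t in (a + h)..r, max ((g (t - h) - g t) / h) 0 ≤ 2 * M := by
  have hrefl : ∀ t ∈ Icc a b, a + b - t ∈ Icc a b := fun t ht =>
    ⟨by linarith [ht.2], by linarith [ht.1]⟩
  have hg' : ConvexOn ℝ (Icc a b) (fun t => g (a + b - t)) := by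
    refine ⟨convex_Icc a b, fun x hx y hy p q hp hq hpq => ?_⟩
    have hcomb : a + b - (p • x + q • y) = p • (a + b - x) + q • (a + b - y) := by
      simp only [smul_eq_mul]
      linear_combination -(a + b) * hpq
    simpa only [hcomb] using hg.2 (hrefl x hx) (hrefl y hy) hp hq hpq
  have hfwd := hg'.intervalIntegral_max_forward_quot_le (fun t ht => hM _ (hrefl t ht)) hh
    (r := a + b - r) (by linarith) (by linarith)
  calc ∫ t in (a + h)..r, max ((g (t - h) - g t) / h) 0
      = ∫ t in (a + h)..r, max ((g (a + b - (a + b - t + h)) - g (a + b - (a + b - t))) / h) 0 := by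
        congr 1 with t
        rw [show a + b - (a + b - t + h) = t - h by ring, sub_sub_cancel]
    _ = ∫ t in (a + b - r)..(b - h), max ((g (a + b - (t + h)) - g (a + b - t)) / h) 0 := by
        rw [intervalIntegral.integral_comp_sub_left
          (fun t => max ((g (a + b - (t + h)) - g (a + b - t)) / h) 0), add_sub_add_left_eq_sub]
    _ ≤ 2 * M := hfwd

end OneDimensional

theorem ConvexOn.comp_insertNth {n : ℕ} {s : Set (Fin (n + 1) → ℝ)} {f : (Fin (n + 1) → ℝ) → ℝ}
    (hf : ConvexOn ℝ s f) (i : Fin (n + 1)) (y : Fin n → ℝ) :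
    ConvexOn ℝ ((fun t => i.insertNth t y) ⁻¹' s) (fun t => f (i.insertNth t y)) := by
  set L := AffineMap.lineMap (k := ℝ) (i.insertNth (α := fun _ => ℝ) 0 y) (i.insertNth 1 y)
  have hline : (fun t : ℝ => i.insertNth t y) = L := by
    ext t j
    rcases i.eq_self_or_eq_succAbove j with rfl | ⟨k, rfl⟩ <;>
      simp [L, AffineMap.lineMap_apply_module, ← add_mul]
  have hcomp := hf.comp_affineMap L
  rwa [← hline] at hcomp

theorem setIntegral_Icc_le_of_forall_slice_le {n : ℕ} (i : Fin (n + 1))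
    {φ : (Fin (n + 1) → ℝ) → ℝ} {l u : Fin (n + 1) → ℝ} (hφ : IntegrableOn φ (Icc l u)) {C : ℝ}
    (hC : ∀ y ∈ Icc (fun j => l (i.succAbove j)) (fun j => u (i.succAbove j)),
      ∫ t in Icc (l i) (u i), φ (i.insertNth t y) ≤ C) :
    ∫ x in Icc l u, φ x ≤
      C * volume.real (Icc (fun j => l (i.succAbove j)) (fun j => u (i.succAbove j))) := by
  set B := Icc (fun j => l (i.succAbove j)) (fun j => u (i.succAbove j))
  set e := (MeasurableEquiv.piFinSuccAbove (fun _ => ℝ) i).symm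
  have he : MeasurePreserving e (volume.prod volume) volume :=
    (volume_preserving_piFinSuccAbove (fun _ => ℝ) i).symm
  have hpre : e ⁻¹' Icc l u = Icc (l i) (u i) ×ˢ B := by
    ext ⟨t, y⟩
    exact Fin.insertNth_mem_Icc
  have hint :
      Integrable (φ ∘ e) ((volume.restrict (Icc (l i) (u i))).prod (volume.restrict B)) := by
    rw [Measure.prod_restrict, ← hpre]
    exact (he.integrableOn_comp_preimage e.measurableEmbedding).2 hφ
  rw [← he.setIntegral_preimage_emb e.measurableEmbedding, hpre, ← Measure.prod_restrict,
    integral_prod_symm (fun p => φ (e p)) hint]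
  calc ∫ y in B, ∫ t in Icc (l i) (u i), φ (e (t, y)) ≤ ∫ y in B, C :=
        setIntegral_mono_on hint.integral_prod_right (integrableOn_const measure_Icc_lt_top.ne)
          measurableSet_Icc hC
    _ = C * volume.real B := by rw [setIntegral_const, smul_eq_mul, mul_comm]

section UnitCube

variable {ι : Type*} [DecidableEq ι] {f : (ι → ℝ) → ℝ} {M ρ σ : ℝ}

theorem add_single_mem_Icc_zero_one {x : ι → ℝ} (hx : x ∈ Icc (fun _ => ρ) (fun _ => 1 - ρ))
    (hσ : |σ| ≤ ρ) (i : ι) : x + Pi.single i σ ∈ Icc 0 1 := by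
  obtain ⟨hσl, hσu⟩ := abs_le.1 hσ
  constructor <;> intro j <;> have := hx.1 j <;> have := hx.2 j <;>
    rcases eq_or_ne j i with rfl | hj <;> simp_all <;> linarith

theorem ConvexOn.integrableOn_max_quot [Fintype ι] (hf : ConvexOn ℝ (Icc 0 1) f)
    (hM : ∀ x ∈ Icc 0 1, |f x| ≤ M) (hσ : |σ| ≤ ρ) (i : ι) :
    IntegrableOn (fun x => max ((f (x + Pi.single i σ) - f x) / ρ) 0)
      (Icc (fun _ => ρ) (fun _ => 1 - ρ)) := by
  have hρ : 0 ≤ ρ := (abs_nonneg σ).trans hσ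
  refine ((hf.integrableOn_comp_add_sub hM measure_Icc_lt_top.ne fun x hx =>
    ⟨Icc_subset_Icc (fun _ => hρ) (fun _ => sub_le_self 1 hρ) hx,
      add_single_mem_Icc_zero_one hx hσ i⟩).div_const ρ).pos_part

end UnitCube

theorem ConvexOn.setIntegral_max_quot_le {d : ℕ} {f : (Fin d → ℝ) → ℝ} {M ρ σ : ℝ}
    (hf : ConvexOn ℝ (Icc 0 1) f) (hM : ∀ x ∈ Icc 0 1, |f x| ≤ M) (hρ : 0 < ρ) (hρ2 : ρ ≤ 1 - ρ)
    (i : Fin d) (hσ : σ = ρ ∨ σ = -ρ) :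
    ∫ x in Icc (fun _ => ρ) (fun _ => 1 - ρ), max ((f (x + Pi.single i σ) - f x) / ρ) 0 ≤
      2 * M := by
  obtain ⟨n, rfl⟩ := Nat.exists_eq_add_one_of_ne_zero i.pos.ne'
  have hM0 : 0 ≤ M := (abs_nonneg _).trans (hM 0 ⟨le_rfl, zero_le_one⟩)
  have hslice : ∀ y ∈ Icc (fun _ : Fin n => ρ) (fun _ => 1 - ρ),
      ∫ t in Icc ρ (1 - ρ),
        max ((f (i.insertNth t y + Pi.single i σ) - f (i.insertNth t y)) / ρ) 0 ≤ 2 * M := by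
    intro y hy
    have hy01 : y ∈ Icc 0 1 := Icc_subset_Icc (fun _ => hρ.le) (fun _ => sub_le_self 1 hρ.le) hy
    have hline : (fun t => i.insertNth (α := fun _ => ℝ) t y) ⁻¹' Icc 0 1 = Icc 0 1 := by
      ext t
      exact Fin.insertNth_mem_Icc.trans (and_iff_left hy01)
    have hg := hf.comp_insertNth i y
    rw [hline] at hg
    have hgM : ∀ t ∈ Icc (0 : ℝ) 1, |f (i.insertNth t y)| ≤ M := fun t ht =>
      hM _ (Fin.insertNth_mem_Icc.2 ⟨ht, hy01⟩)
    have hshift : ∀ t : ℝ, (i.insertNth t y : Fin (n + 1) → ℝ) + Pi.single i σ =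
        i.insertNth (t + σ) y := fun t => by
      rw [← Fin.insertNth_zero_right, ← Fin.insertNth_add, add_zero]
    simp_rw [hshift, integral_Icc_eq_integral_Ioc, ← intervalIntegral.integral_of_le hρ2]
    rcases hσ with rfl | rfl
    · exact hg.intervalIntegral_max_forward_quot_le hgM hρ hρ.le hρ2
    · simpa [← sub_eq_add_neg] using hg.intervalIntegral_max_backward_quot_le hgM hρ
        (by rwa [zero_add]) (sub_le_self 1 hρ.le)
  calc _ ≤ 2 * M * volume.real (Icc (fun _ : Fin n => ρ) (fun _ => 1 - ρ)) :=
        setIntegral_Icc_le_of_forall_slice_le i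
          (hf.integrableOn_max_quot hM (by rcases hσ with rfl | rfl <;> simp [abs_of_pos hρ]) i)
          hslice
    _ ≤ 2 * M := by
        refine mul_le_of_le_one_right (by linarith) ?_
        rw [measureReal_def, Real.volume_Icc_pi_toReal (fun _ => hρ2)]
        exact Finset.prod_le_one (fun _ _ => by linarith) (fun _ _ => by linarith)

theorem integral_subgradient_norm_le_general (d : ℕ)
    (f : (Fin d → ℝ) → ℝ) (m : (Fin d → ℝ) → Fin d → ℝ)
    (hf : ConvexOn ℝ (Set.Icc (0 : Fin d → ℝ) 1) f)
    (hfb : ∀ x ∈ Set.Icc (0 : Fin d → ℝ) 1, |f x| ≤ 1)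
    (hm : ∀ x : Fin d → ℝ, (∀ i, x i ∈ Set.Ioo (0:ℝ) 1) →
      ∀ z ∈ Set.Icc (0 : Fin d → ℝ) 1, f x + ∑ i, m x i * (z i - x i) ≤ f z)
    (ρ : ℝ) (hρ : 0 < ρ) (hρ2 : ρ < 1/2) :
    ∫ x in Set.Icc (fun _ => ρ : Fin d → ℝ) (fun _ => 1 - ρ),
      Real.sqrt (∑ i, (m x i) ^ 2) ≤ 8 * d := by
  set Q := Icc (fun _ => ρ : Fin d → ℝ) (fun _ => 1 - ρ)
  set D : Fin d → ℝ → (Fin d → ℝ) → ℝ := fun i σ x => max ((f (x + Pi.single i σ) - f x) / ρ) 0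
  have hρ_abs : |ρ| ≤ ρ := (abs_of_pos hρ).le
  have hρ_abs' : |-ρ| ≤ ρ := by rwa [abs_neg]
  have hρ_half : ρ ≤ 1 - ρ := by linarith
  have hint : ∀ i, IntegrableOn (fun x => D i ρ x + D i (-ρ) x) Q := fun i =>
    (hf.integrableOn_max_quot hfb hρ_abs i).add (hf.integrableOn_max_quot hfb hρ_abs' i)
  have hle : ∀ i, ∫ x in Q, (D i ρ x + D i (-ρ) x) ≤ 4 := fun i => by
    rw [integral_add (hf.integrableOn_max_quot hfb hρ_abs i)
      (hf.integrableOn_max_quot hfb hρ_abs' i)]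
    linarith [hf.setIntegral_max_quot_le hfb hρ hρ_half i (.inl rfl),
      hf.setIntegral_max_quot_le hfb hρ hρ_half i (.inr rfl)]
  have hpt : ∀ x ∈ Q, √(∑ i, m x i ^ 2) ≤ ∑ i, (D i ρ x + D i (-ρ) x) := fun x hx =>
    (Real.sqrt_sum_sq_le_sum_abs _ _).trans <| Finset.sum_le_sum fun i _ =>
      abs_le_max_quot_add_max_quot_of_subgradient
        (hm x fun j => ⟨hρ.trans_le (hx.1 j), (hx.2 j).trans_lt (by linarith)⟩) hρ i
        (add_single_mem_Icc_zero_one hx hρ_abs i) (add_single_mem_Icc_zero_one hx hρ_abs' i)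
  calc ∫ x in Q, √(∑ i, m x i ^ 2) ≤ ∫ x in Q, ∑ i, (D i ρ x + D i (-ρ) x) :=
        integral_mono_of_nonneg (.of_forall fun _ => Real.sqrt_nonneg _)
          (integrable_finsetSum _ fun i _ => hint i)
          ((ae_restrict_iff' measurableSet_Icc).2 (.of_forall hpt))
    _ = ∑ i, ∫ x in Q, (D i ρ x + D i (-ρ) x) := integral_finsetSum _ fun i _ => hint i
    _ ≤ ∑ _i : Fin d, (4 : ℝ) := Finset.sum_le_sum fun i _ => hle i
    _ ≤ 8 * d := by simp; linarith

theorem integral_subgradient_norm_le (d : ℕ) (hd : 1 ≤ d)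
    (f : (Fin d → ℝ) → ℝ) (m : (Fin d → ℝ) → Fin d → ℝ)
    (hf : ConvexOn ℝ (Set.Icc (0 : Fin d → ℝ) 1) f)
    (hfb : ∀ x ∈ Set.Icc (0 : Fin d → ℝ) 1, |f x| ≤ 1)
    (hm : ∀ x : Fin d → ℝ, (∀ i, x i ∈ Set.Ioo (0:ℝ) 1) →
      ∀ z ∈ Set.Icc (0 : Fin d → ℝ) 1, f x + ∑ i, m x i * (z i - x i) ≤ f z)
    (ρ : ℝ) (hρ : 0 < ρ) (hρ2 : ρ < 1/2) :
    ∫ x in Set.Icc (fun _ => ρ : Fin d → ℝ) (fun _ => 1 - ρ),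
      Real.sqrt (∑ i, (m x i) ^ 2) ≤ 8 * d :=
  integral_subgradient_norm_le_general d f m hf hfb hm ρ hρ hρ2
end

section
/- For d = 1, let f_α(x) = max(0, 1 - x/α) for 0 < α ≤ 1 and g(x) = 0 on [0,1]. Then for 1 ≤ p < ∞, ||f_α - g||_p = α^{1/p}/(1+p)^{1/p}, and the Hausdorff distance between the truncated epigraphs satisfies ℓ_H(V_{f_α}(1), V_g(1)) = α/√(1+α²). -/
/-- Truncated epigraph of `h : [0,1] → ℝ` as a subset of `ℝ²` with the Euclidean metric. -/
def truncEpigraph1 (h : ℝ → ℝ) : Set (EuclideanSpace ℝ (Fin 2)) :=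
  {z | z 0 ∈ Set.Icc (0:ℝ) 1 ∧ h (z 0) ≤ z 1 ∧ z 1 ≤ 1}

/-!
Since `f_α ≥ 0`, `V_{f_α}(1) ⊆ V_0(1)`, so the Hausdorff distance is the largest distance from a
point of `V_0(1)` to `V_{f_α}(1)`. A point `(x, y) ∈ V_0(1)` lies in `V_{f_α}(1)` exactly when
`x + α y ≥ α`; otherwise its orthogonal projection onto the line `x + α y = α` lies in `V_{f_α}(1)`,
at distance `(α - x - α y) / √(1 + α²) ≤ α / √(1 + α²)`, with equality at the origin. The `Lᵖ`
norm is the elementary integral `∫₀^α (1 - x/α)^p dx = α / (1 + p)`.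
-/

open MeasureTheory Metric Set

lemma integral_one_sub_div_rpow {α p : ℝ} (hα : 0 < α) (hp : -1 < p) :
    ∫ x in (0:ℝ)..α, (1 - x / α) ^ p = α / (1 + p) := by
  rw [intervalIntegral.integral_comp_div (fun u => (1 - u) ^ p) hα.ne', zero_div, div_self hα.ne',
    intervalIntegral.integral_comp_sub_left (fun v => v ^ p), sub_self, sub_zero,
    integral_rpow (Or.inl hp), Real.one_rpow, Real.zero_rpow (by linarith), smul_eq_mul]
  ring

lemma integral_Icc_max_one_sub_div_rpow {α p : ℝ} (hα : 0 < α) (hα1 : α ≤ 1) (hp : 0 < p) :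
    ∫ x in Icc (0:ℝ) 1, max 0 (1 - x / α) ^ p = α / (1 + p) := by
  have hint : ∀ a b : ℝ, IntervalIntegrable (fun x => max 0 (1 - x / α) ^ p) volume a b :=
    fun a b => (Continuous.rpow_const (by fun_prop) fun _ => Or.inr hp.le).intervalIntegrable a b
  have on_support :
      EqOn (fun x => max 0 (1 - x / α) ^ p) (fun x => (1 - x / α) ^ p) (uIcc 0 α) := by
    intro x hx
    rw [uIcc_of_le hα.le] at hx
    have : x / α ≤ 1 := (div_le_one hα).2 hx.2
    simp only [max_eq_right (by linarith : (0:ℝ) ≤ 1 - x / α)]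
  have off_support : EqOn (fun x => max 0 (1 - x / α) ^ p) (fun _ => 0) (uIcc α 1) := by
    intro x hx
    rw [uIcc_of_le hα1] at hx
    have : 1 ≤ x / α := (one_le_div hα).2 hx.1
    simp only [max_eq_left (by linarith : 1 - x / α ≤ 0), Real.zero_rpow hp.ne']
  rw [integral_Icc_eq_integral_Ioc, ← intervalIntegral.integral_of_le zero_le_one,
    ← intervalIntegral.integral_add_adjacent_intervals (hint 0 α) (hint α 1),
    intervalIntegral.integral_congr on_support, intervalIntegral.integral_congr off_support,
    intervalIntegral.integral_zero, add_zero, integral_one_sub_div_rpow hα (by linarith)]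

lemma EuclideanSpace.dist_fin_two (z w : EuclideanSpace ℝ (Fin 2)) :
    dist z w = √((z 0 - w 0) ^ 2 + (z 1 - w 1) ^ 2) := by
  simp [EuclideanSpace.dist_eq, Fin.sum_univ_two, Real.dist_eq, sq_abs]

lemma Metric.hausdorffDist_eq_of_subset {X : Type*} [PseudoMetricSpace X] {s t : Set X} {r : ℝ}
    {x₀ : X} (hst : s ⊆ t) (ht : Bornology.IsBounded t) (hx₀ : x₀ ∈ t)
    (hfar : ∀ y ∈ s, r ≤ dist x₀ y) (hnear : ∀ x ∈ t, ∃ y ∈ s, dist x y ≤ r) :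
    hausdorffDist s t = r := by
  obtain ⟨y₀, hy₀, hx₀y₀⟩ := hnear x₀ hx₀
  have hr : 0 ≤ r := dist_nonneg.trans hx₀y₀
  refine le_antisymm (hausdorffDist_le_of_mem_dist hr (fun y hy => ⟨y, hst hy, by simpa⟩) hnear) ?_
  have hfin : hausdorffEDist t s ≠ ⊤ :=
    hausdorffEDist_ne_top_of_nonempty_of_bounded ⟨x₀, hx₀⟩ ⟨y₀, hy₀⟩ ht (ht.subset hst)
  calc r ≤ infDist x₀ s := (le_infDist ⟨y₀, hy₀⟩).2 hfar
    _ ≤ hausdorffDist t s := infDist_le_hausdorffDist_of_mem hx₀ hfin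
    _ = hausdorffDist s t := hausdorffDist_comm

lemma truncEpigraph1_anti {h h' : ℝ → ℝ} (hle : h ≤ h') : truncEpigraph1 h' ⊆ truncEpigraph1 h :=
  fun _ ⟨hx, hy, hy1⟩ => ⟨hx, (hle _).trans hy, hy1⟩

lemma isBounded_truncEpigraph1_zero : Bornology.IsBounded (truncEpigraph1 fun _ => 0) := by
  refine (isBounded_closedBall (x := 0) (r := 2)).subset ?_
  rintro z ⟨⟨hx0, hx1⟩, hy0, hy1⟩
  rw [mem_closedBall, EuclideanSpace.dist_fin_two, Real.sqrt_le_left (by norm_num)]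
  simp only [PiLp.zero_apply]
  nlinarith

section Ramp

variable {α : ℝ}

lemma mem_truncEpigraph1_ramp_iff (hα : 0 < α) {z : EuclideanSpace ℝ (Fin 2)} :
    z ∈ truncEpigraph1 (fun x => max 0 (1 - x / α)) ↔
      z 0 ∈ Icc 0 1 ∧ 0 ≤ z 1 ∧ α ≤ z 0 + α * z 1 ∧ z 1 ≤ 1 := by
  have key : 1 - z 0 / α ≤ z 1 ↔ α ≤ z 0 + α * z 1 := by
    rw [sub_le_comm, le_div_iff₀ hα]; constructor <;> intro <;> linarith
  simp only [truncEpigraph1, mem_ofPred_eq, max_le_iff, key, and_assoc]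

/-- Cauchy–Schwarz: `α ≤ x + α y ≤ √(1 + α²) · ‖(x, y)‖`. -/
lemma div_sqrt_le_dist_zero_of_mem_ramp (hα : 0 < α) {w : EuclideanSpace ℝ (Fin 2)}
    (hw : w ∈ truncEpigraph1 (fun x => max 0 (1 - x / α))) :
    α / √(1 + α ^ 2) ≤ dist 0 w := by
  obtain ⟨-, -, hline, -⟩ := (mem_truncEpigraph1_ramp_iff hα).1 hw
  rw [EuclideanSpace.dist_fin_two, div_le_iff₀ (by positivity), ← Real.sqrt_mul (by positivity),
    Real.le_sqrt hα.le (by positivity)]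
  simp only [PiLp.zero_apply, zero_sub, neg_sq]
  nlinarith [sq_nonneg (α * w 0 - w 1)]

lemma exists_mem_ramp_dist_le (hα : 0 < α) (hα1 : α ≤ 1) {z : EuclideanSpace ℝ (Fin 2)}
    (hz : z ∈ truncEpigraph1 (fun _ => 0)) :
    ∃ w ∈ truncEpigraph1 (fun x => max 0 (1 - x / α)), dist z w ≤ α / √(1 + α ^ 2) := by
  obtain ⟨⟨hx0, hx1⟩, hy0, hy1⟩ := hz
  by_cases hline : α ≤ z 0 + α * z 1
  · refine ⟨z, (mem_truncEpigraph1_ramp_iff hα).2 ⟨⟨hx0, hx1⟩, hy0, hline, hy1⟩, ?_⟩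
    rw [dist_self]
    positivity
  set t := α - z 0 - α * z 1
  have hs : 0 < 1 + α ^ 2 := by positivity
  set u := t / (1 + α ^ 2)
  have hu : u * (1 + α ^ 2) = t := div_mul_cancel₀ t hs.ne'
  have hu0 : 0 ≤ u := div_nonneg (by linarith) hs.le
  have ht : t ≤ α := by nlinarith
  refine ⟨!₂[z 0 + u, z 1 + α * u], (mem_truncEpigraph1_ramp_iff hα).2 ?_, ?_⟩
  · simp only [Matrix.cons_val_zero, Matrix.cons_val_one]
    refine ⟨⟨by positivity, by nlinarith⟩, by positivity, by nlinarith, by nlinarith⟩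
  · have hdist : (z 0 - (z 0 + u)) ^ 2 + (z 1 - (z 1 + α * u)) ^ 2 = t ^ 2 / (1 + α ^ 2) := by
      field_simp; rw [← hu]; ring
    rw [EuclideanSpace.dist_fin_two]
    simp only [Matrix.cons_val_zero, Matrix.cons_val_one]
    rw [hdist, Real.sqrt_div' _ hs.le, Real.sqrt_sq (by linarith)]
    gcongr

end Ramp

theorem Lp_vs_hausdorff_counterexample (α p : ℝ) (hα : 0 < α) (hα1 : α ≤ 1) (hp : 1 ≤ p) :
    (∫ x in Set.Icc (0:ℝ) 1, |max 0 (1 - x / α) - 0| ^ p) ^ (1/p)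
        = α ^ (1/p) / (1 + p) ^ (1/p) ∧
    Metric.hausdorffDist (truncEpigraph1 (fun x => max 0 (1 - x / α)))
        (truncEpigraph1 (fun _ => 0)) = α / Real.sqrt (1 + α ^ 2) := by
  constructor
  · simp_rw [sub_zero, abs_of_nonneg (le_max_left (0 : ℝ) _)]
    rw [integral_Icc_max_one_sub_div_rpow hα hα1 (by linarith), Real.div_rpow hα.le (by linarith)]
  · have zero_mem : (0 : EuclideanSpace ℝ (Fin 2)) ∈ truncEpigraph1 (fun _ => 0) :=
      ⟨⟨le_rfl, zero_le_one⟩, le_rfl, zero_le_one⟩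
    exact hausdorffDist_eq_of_subset (truncEpigraph1_anti fun _ => le_max_left _ _)
      isBounded_truncEpigraph1_zero zero_mem (fun _ => div_sqrt_le_dist_zero_of_mem_ramp hα)
      (fun _ => exists_mem_ramp_dist_le hα hα1)
end

section
/- Let S = ∏_j [u_j, v_j] and S' = ∏_j [u'_j, v'_j] be two distinct cubes from a grid in [0,1]^d in which each interval has length √η and any two distinct intervals are separated by distance at least (1/2)√(η(d-1)). Then for every x ∈ S', h_S(x) ≤ f_0(x), where h_S(x) = f_0(x) + (1/d) Σ_j (x_j - u_j)(v_j - x_j). -/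
theorem hS_le_f0_on_other_cube (d : ℕ) (hd : 1 ≤ d) (η : ℝ) (hη : 0 < η)
    (u v u' v' : Fin d → ℝ)
    (hrange : ∀ j, 0 ≤ u j ∧ v j ≤ 1) (hrange' : ∀ j, 0 ≤ u' j ∧ v' j ≤ 1)
    (hlen : ∀ j, v j - u j = Real.sqrt η) (hlen' : ∀ j, v' j - u' j = Real.sqrt η)
    (hsep : ∀ j, (u j = u' j ∧ v j = v' j) ∨
      v j + (1/2) * Real.sqrt (η * ((d:ℝ) - 1)) ≤ u' j ∨
      v' j + (1/2) * Real.sqrt (η * ((d:ℝ) - 1)) ≤ u j)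
    (hne : ∃ j, u j ≠ u' j ∨ v j ≠ v' j) :
    ∀ x : Fin d → ℝ, (∀ j, x j ∈ Set.Icc (u' j) (v' j)) →
      (1/d : ℝ) * ∑ j, x j ^ 2 + (1/d : ℝ) * ∑ j, (x j - u j) * (v j - x j)
        ≤ (1/d : ℝ) * ∑ j, x j ^ 2 := by
  intro x hx
  have hd1 : (1:ℝ) ≤ (d:ℝ) := by exact_mod_cast hd
  have hsq : Real.sqrt η ^ 2 = η := Real.sq_sqrt hη.le
  have hsq0 : (0:ℝ) ≤ Real.sqrt η := Real.sqrt_nonneg _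
  set c : ℝ := (1/2) * Real.sqrt (η * ((d:ℝ) - 1)) with hc
  have hc0 : 0 ≤ c := by positivity
  have hcsq : c ^ 2 = η * ((d:ℝ) - 1) / 4 := by
    have : Real.sqrt (η * ((d:ℝ) - 1)) ^ 2 = η * ((d:ℝ) - 1) :=
      Real.sq_sqrt (by nlinarith)
    nlinarith [this]
  obtain ⟨j₀, hj₀⟩ := hne
  have hsame : ∀ j, (x j - u j) * (v j - x j) ≤ η / 4 := by
    intro j
    have hl := hlen j
    nlinarith [sq_nonneg (x j - u j - (v j - x j))]
  have hdist : (x j₀ - u j₀) * (v j₀ - x j₀) ≤ -(η * ((d:ℝ) - 1) / 4) := by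
    rcases hsep j₀ with ⟨h1, h2⟩ | h | h
    · exact hj₀.elim (fun h => absurd h1 h) (fun h => absurd h2 h)
    · have hx1 := (hx j₀).1
      have hl := hlen j₀
      have ha : c ≤ x j₀ - u j₀ := by linarith
      have hb : c ≤ x j₀ - v j₀ := by linarith
      have := mul_le_mul ha hb hc0 (by linarith)
      nlinarith [this]
    · have hx2 := (hx j₀).2
      have hl := hlen j₀
      have ha : c ≤ u j₀ - x j₀ := by linarith
      have hb : c ≤ v j₀ - x j₀ := by linarith
      have := mul_le_mul ha hb hc0 (by linarith)
      nlinarith [this]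
  have key : ∑ j, (x j - u j) * (v j - x j) ≤ 0 := by
    have hmem : j₀ ∈ (Finset.univ : Finset (Fin d)) := Finset.mem_univ _
    rw [← Finset.add_sum_erase _ _ hmem]
    have h1 : ∑ j ∈ Finset.univ.erase j₀, (x j - u j) * (v j - x j)
        ≤ ((d:ℝ) - 1) * (η/4) := by
      have hb := Finset.sum_le_card_nsmul (Finset.univ.erase j₀)
        (fun j => (x j - u j) * (v j - x j)) (η/4) (fun j _ => hsame j)
      have hcard : (Finset.univ.erase j₀).card = d - 1 := by
        simp [Finset.card_erase_of_mem]
      rw [hcard, nsmul_eq_mul] at hb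
      have : ((d - 1 : ℕ) : ℝ) = (d:ℝ) - 1 := by
        have := Nat.cast_sub hd (R := ℝ); simpa using this
      linarith [hb, this.symm ▸ hb]
    linarith
  have hdpos : (0:ℝ) ≤ 1 / (d:ℝ) := by positivity
  nlinarith [mul_nonneg hdpos (neg_nonneg.mpr key)]
end
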